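/- arXiv:2301.00324 — 3 statements merged into one kernel-verified Lean document; each statement's English description precedes it below -/
import Mathlib

section
/- For R>0, p ∈ ℂ, and ζ ∈ ℂ with |ζ - p| < R, the integral of log|ζ - z| over the disc D(p,R) with respect to the normalized area measure dA = d²z/π equals R² log R - R²/2 + |ζ - p|²/2. -/
open MeasureTheory Complex
open intervalIntegral Metric Set

lemma slit_aux (c : ℂ) (hc : ‖c‖ < 1) {z : ℂ} (hz : ‖z‖ ≤ 1) :
    (1 - c * z) ∈ Complex.slitPlane := by
  rw [Complex.mem_slitPlane_iff]
  left
  have h1 : ‖c * z‖ < 1 := by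
    rw [norm_mul]
    calc ‖c‖ * ‖z‖ ≤ ‖c‖ * 1 :=
          mul_le_mul_of_nonneg_left hz (norm_nonneg c)
      _ = ‖c‖ := mul_one _
      _ < 1 := hc
  have h2 : (c * z).re ≤ ‖c * z‖ := Complex.re_le_norm _
  simp only [Complex.sub_re, Complex.one_re]
  linarith

lemma cont_log_one_sub (c : ℂ) (hc : ‖c‖ < 1) :
    Continuous fun θ : ℝ => Complex.log (1 - c * Complex.exp (θ * I)) := by
  rw [continuous_iff_continuousAt]
  intro θ
  apply ContinuousAt.clog
  · fun_prop
  · exact slit_aux c hc (le_of_eq (Complex.norm_exp_ofReal_mul_I θ))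

lemma L0 (c : ℂ) (hc : ‖c‖ < 1) :
    ∫ θ in (0:ℝ)..(2*Real.pi), Real.log (‖1 - c * Complex.exp (θ * I)‖) = 0 := by
  set f : ℂ → ℂ := fun z => Complex.log (1 - c * z) with hf
  have hd : DiffContOnCl ℂ f (ball 0 1) := by
    constructor
    · intro z hz
      apply DifferentiableAt.differentiableWithinAt
      apply DifferentiableAt.clog (by fun_prop)
      exact slit_aux c hc (le_of_lt (mem_ball_zero_iff.mp hz))
    · rw [closure_ball (0:ℂ) one_ne_zero]
      intro z hz
      apply ContinuousAt.continuousWithinAt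
      apply ContinuousAt.clog (by fun_prop)
      exact slit_aux c hc (mem_closedBall_zero_iff.mp hz)
  have key := hd.circleIntegral_sub_inv_smul (mem_ball_self one_pos)
  have hf0 : f 0 = 0 := by simp [hf]
  rw [hf0, smul_zero] at key
  rw [circleIntegral] at key
  simp only [deriv_circleMap, circleMap_zero, Complex.ofReal_one, sub_zero, one_mul, smul_eq_mul] at key
  have key2 : ∫ θ in (0:ℝ)..(2*Real.pi), I * f (Complex.exp (θ * I)) = 0 := by
    rw [← key]
    apply intervalIntegral.integral_congr
    intro θ _
    have hne : Complex.exp (θ * I) ≠ 0 := Complex.exp_ne_zero _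
    field_simp
  rw [intervalIntegral.integral_const_mul] at key2
  have key3 : ∫ θ in (0:ℝ)..(2*Real.pi), f (Complex.exp (θ * I)) = 0 := by
    rcases mul_eq_zero.mp key2 with h | h
    · exact absurd h I_ne_zero
    · exact h
  have hint : IntervalIntegrable (fun θ : ℝ => f (Complex.exp (θ * I))) volume 0 (2*Real.pi) :=
    (cont_log_one_sub c hc).intervalIntegrable _ _
  have := Complex.reCLM.intervalIntegral_comp_comm hint
  rw [key3] at this
  simp only [map_zero] at this
  have heq : ∫ θ in (0:ℝ)..(2*Real.pi), Real.log (‖1 - c * Complex.exp (θ * I)‖)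
      = ∫ x in (0:ℝ)..(2*Real.pi), Complex.reCLM (f (Complex.exp (x * I))) := by
    apply intervalIntegral.integral_congr
    intro θ _
    simp only [Complex.reCLM_apply, hf, Complex.log_re]
  rw [heq, this]

lemma exp_per : Function.Periodic (fun θ : ℝ => Complex.exp (θ * I)) (2*Real.pi) := by
  intro θ
  simp only
  push_cast
  rw [add_mul, Complex.exp_add, Complex.exp_two_pi_mul_I, mul_one]

lemma L0per (c : ℂ) :
    Function.Periodic (fun θ : ℝ => Real.log (‖1 - c * Complex.exp (θ * I)‖))
      (2*Real.pi) := by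
  intro θ
  simp only [exp_per θ]

lemma L0neg (c : ℂ) (hc : ‖c‖ < 1) :
    ∫ θ in (0:ℝ)..(2*Real.pi), Real.log (‖1 - c * Complex.exp (-(θ * I))‖) = 0 := by
  have h1 := intervalIntegral.integral_comp_neg (a := (0:ℝ)) (b := 2*Real.pi)
    (fun θ : ℝ => Real.log (‖1 - c * Complex.exp (θ * I)‖))
  have h2 : ∀ θ : ℝ, Real.log (‖1 - c * Complex.exp (((-θ : ℝ) : ℂ) * I)‖)
      = Real.log (‖1 - c * Complex.exp (-(θ * I))‖) := by
    intro θ; push_cast; ring_nf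
  simp only [h2] at h1
  rw [neg_zero] at h1
  rw [h1]
  have h3 := (L0per c).intervalIntegral_add_eq (-(2*Real.pi)) 0
  have h4 : -(2*Real.pi) + 2*Real.pi = 0 := by ring
  rw [h4] at h3
  rw [zero_add] at h3
  rw [h3]
  exact L0 c hc

lemma absne (c : ℂ) (hc : ‖c‖ < 1) (w : ℂ) (hw : ‖w‖ = 1) :
    (1 - c * w) ≠ 0 := by
  intro h
  have : ‖c * w‖ = 1 := by
    have : c * w = 1 := by linear_combination -h
    rw [this, norm_one]
  rw [norm_mul, hw, mul_one] at this
  exact absurd this (ne_of_lt hc)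

lemma L1 (a : ℂ) {r : ℝ} (hr : 0 < r) (hne : ‖a‖ ≠ r) :
    ∫ θ in Set.Ioo (-Real.pi) Real.pi,
        Real.log (‖a - r * Complex.exp (θ * I)‖) =
      2 * Real.pi * Real.log (max (‖a‖) r) := by
  have hint : ∀ t : ℝ, ∫ θ in Set.Ioo (-Real.pi) Real.pi,
      Real.log (‖a - r * Complex.exp (θ * I)‖) =
      ∫ θ in (-Real.pi)..Real.pi, Real.log (‖a - r * Complex.exp (θ * I)‖) := by
    intro _
    rw [intervalIntegral.integral_of_le (by linarith [Real.pi_pos]),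
      MeasureTheory.integral_Ioc_eq_integral_Ioo]
  rw [hint 0]
  have hper : Function.Periodic
      (fun θ : ℝ => Real.log (‖a - r * Complex.exp (θ * I)‖)) (2*Real.pi) := by
    intro θ; simp only [exp_per θ]
  have hshift := hper.intervalIntegral_add_eq (-Real.pi) 0
  have he1 : -Real.pi + 2*Real.pi = Real.pi := by ring
  rw [he1, zero_add] at hshift
  rw [hshift]
  rcases lt_or_gt_of_ne hne with hlt | hgt
  · -- |a| < r, answer 2π log r
    rw [max_eq_right hlt.le]
    set c : ℂ := a / r with hcdef
    have hc : ‖c‖ < 1 := by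
      rw [hcdef, norm_div, Complex.norm_of_nonneg hr.le, div_lt_one hr]
      exact hlt
    have habs : ∀ θ : ℝ, Real.log (‖a - r * Complex.exp (θ * I)‖)
        = Real.log r + Real.log (‖1 - c * Complex.exp (-(θ * I))‖) := by
      intro θ
      have hE : Complex.exp (θ * I) ≠ 0 := Complex.exp_ne_zero _
      have hrc : (r : ℂ) * c = a := by
        rw [hcdef]
        have hr' : (r : ℂ) ≠ 0 := by exact_mod_cast ne_of_gt hr
        field_simp
      have hfac : a - r * Complex.exp (θ * I)
          = (-(r * Complex.exp (θ * I))) * (1 - c * Complex.exp (-(θ * I))) := by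
        rw [Complex.exp_neg]
        have h6 : (-((r:ℂ) * Complex.exp (θ * I))) * (1 - c * (Complex.exp (θ * I))⁻¹)
            = -((r:ℂ) * Complex.exp (θ * I)) + (r:ℂ) * c
              * (Complex.exp (θ * I) * (Complex.exp (θ * I))⁻¹) := by ring
        rw [h6, mul_inv_cancel₀ hE, mul_one, hrc]
        ring
      rw [hfac, norm_mul, norm_neg, norm_mul, Complex.norm_of_nonneg hr.le,
        Complex.norm_exp_ofReal_mul_I, mul_one]
      rw [Real.log_mul (ne_of_gt hr)]
      apply norm_ne_zero_iff.mpr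
      apply absne c hc
      have hth : -((θ:ℂ) * I) = ((-θ : ℝ) : ℂ) * I := by push_cast; ring
      rw [hth, Complex.norm_exp_ofReal_mul_I]
    simp only [habs]
    rw [intervalIntegral.integral_add (intervalIntegrable_const)]
    · rw [L0neg c hc, add_zero, intervalIntegral.integral_const, sub_zero, smul_eq_mul]
    · apply Continuous.intervalIntegrable
      have hcont : Continuous fun θ : ℝ => Real.log (‖1 - c * Complex.exp (θ * I)‖) := by
        rw [continuous_iff_continuousAt]
        intro θ
        have := (cont_log_one_sub c hc).continuousAt (x := θ)
        exact (Complex.continuous_re.continuousAt.comp this).congr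
          (by filter_upwards with x; simp [Complex.log_re])
      have : Continuous fun θ : ℝ => Real.log (‖1 - c * Complex.exp (((-θ : ℝ):ℂ) * I)‖) :=
        hcont.comp continuous_neg
      refine this.congr ?_
      intro x
      congr 2
      push_cast
      ring
  · -- r < |a|, answer 2π log |a|
    rw [max_eq_left hgt.le]
    have ha : a ≠ 0 := by
      intro h; rw [h, norm_zero] at hgt; linarith
    set c : ℂ := (r : ℂ) / a with hcdef
    have hc : ‖c‖ < 1 := by
      rw [hcdef, norm_div, Complex.norm_of_nonneg hr.le, div_lt_one]
      · exact hgt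
      · exact norm_pos_iff.mpr ha
    have habs : ∀ θ : ℝ, Real.log (‖a - r * Complex.exp (θ * I)‖)
        = Real.log (‖a‖) + Real.log (‖1 - c * Complex.exp (θ * I)‖) := by
      intro θ
      have hfac : a - r * Complex.exp (θ * I) = a * (1 - c * Complex.exp (θ * I)) := by
        rw [hcdef]; field_simp
      rw [hfac, norm_mul, Real.log_mul (norm_ne_zero_iff.mpr ha)]
      exact norm_ne_zero_iff.mpr (absne c hc _ (Complex.norm_exp_ofReal_mul_I θ))
    simp only [habs]
    rw [intervalIntegral.integral_add (intervalIntegrable_const)]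
    · rw [L0 c hc, add_zero, intervalIntegral.integral_const, sub_zero, smul_eq_mul]
    · apply Continuous.intervalIntegrable
      rw [continuous_iff_continuousAt]
      intro θ
      exact (Complex.continuous_re.continuousAt.comp
        ((cont_log_one_sub c hc).continuousAt (x := θ))).congr
        (by filter_upwards with x; simp [Complex.log_re])

lemma Fcont : Continuous fun r : ℝ => r^2 * Real.log r / 2 - r^2/4 := by
  have h : Continuous fun r : ℝ => r * (r * Real.log r) :=
    continuous_id.mul Real.continuous_mul_log
  have h2 : (fun r : ℝ => r^2 * Real.log r / 2 - r^2/4)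
      = fun r : ℝ => (r * (r * Real.log r)) / 2 - r^2/4 := by
    funext r; ring
  rw [h2]
  exact (h.div_const 2).sub ((continuous_pow 2).div_const 4)

lemma rlog_int (u v : ℝ) : IntervalIntegrable (fun r : ℝ => r * Real.log r) volume u v :=
  Real.continuous_mul_log.intervalIntegrable u v

lemma Lftc {s R : ℝ} (hs : 0 ≤ s) (hsR : s ≤ R) :
    ∫ r in s..R, r * Real.log r =
      (R^2 * Real.log R / 2 - R^2/4) - (s^2 * Real.log s / 2 - s^2/4) := by
  apply intervalIntegral.integral_eq_sub_of_hasDeriv_right_of_le hsR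
    Fcont.continuousOn _ (rlog_int s R)
  intro x hx
  have hx0 : 0 < x := lt_of_le_of_lt hs hx.1
  have h1 : HasDerivAt (fun r : ℝ => r^2 * Real.log r / 2 - r^2/4) (x * Real.log x) x := by
    have hp : HasDerivAt (fun r : ℝ => r^2) (2*x) x := by
      simpa using hasDerivAt_pow 2 x
    have hl : HasDerivAt Real.log x⁻¹ x := Real.hasDerivAt_log (ne_of_gt hx0)
    have := ((hp.mul hl).div_const 2).sub (hp.div_const 4)
    refine this.congr_deriv ?_
    field_simp
    ring
  exact h1.hasDerivWithinAt

lemma Lrad {s R : ℝ} (hs : 0 ≤ s) (hsR : s < R) :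
    ∫ r in Set.Ioo (0:ℝ) R, r * (2 * Real.pi * Real.log (max s r)) =
      Real.pi * (R^2 * Real.log R - R^2/2 + s^2/2) := by
  have hR : (0:ℝ) ≤ R := le_trans hs hsR.le
  rw [← MeasureTheory.integral_Ioc_eq_integral_Ioo,
    ← intervalIntegral.integral_of_le hR]
  have h1 : ∫ r in (0:ℝ)..s, r * (2 * Real.pi * Real.log (max s r))
      = Real.pi * s^2 * Real.log s := by
    have hcongr : ∀ r ∈ Set.uIcc (0:ℝ) s, r * (2 * Real.pi * Real.log (max s r))
        = (2 * Real.pi * Real.log s) * r := by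
      intro r hr
      rw [Set.uIcc_of_le hs] at hr
      rw [max_eq_left hr.2]
      ring
    rw [intervalIntegral.integral_congr hcongr, intervalIntegral.integral_const_mul,
      integral_id]
    ring
  have h2 : ∫ r in s..R, r * (2 * Real.pi * Real.log (max s r))
      = 2 * Real.pi * ((R^2 * Real.log R / 2 - R^2/4) - (s^2 * Real.log s / 2 - s^2/4)) := by
    have hcongr : ∀ r ∈ Set.uIcc s R, r * (2 * Real.pi * Real.log (max s r))
        = (2 * Real.pi) * (r * Real.log r) := by
      intro r hr
      rw [Set.uIcc_of_le hsR.le] at hr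
      rcases eq_or_lt_of_le hr.1 with h | h
      · rw [← h, max_self]; ring
      · rw [max_eq_right h.le]; ring
    rw [intervalIntegral.integral_congr hcongr, intervalIntegral.integral_const_mul,
      Lftc hs hsR.le]
  have hi1 : IntervalIntegrable (fun r : ℝ => r * (2 * Real.pi * Real.log (max s r)))
      volume 0 s := by
    refine IntervalIntegrable.congr_ae
      (f := fun r => (2 * Real.pi * Real.log s) * r)
      ((continuous_const.mul continuous_id).intervalIntegrable _ _) ?_
    rw [Filter.eventuallyEq_iff_exists_mem]
    refine ⟨Set.uIoc (0:ℝ) s, ?_, ?_⟩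
    · rw [MeasureTheory.mem_ae_iff]
      simp [MeasureTheory.Measure.restrict_apply (measurableSet_uIoc (a := (0:ℝ)) (b := s)).compl]
    · intro r hr
      have : max s r = s := by
        rw [Set.uIoc_of_le hs] at hr
        exact max_eq_left hr.2
      simp only [this]; ring
  have hi2 : IntervalIntegrable (fun r : ℝ => r * (2 * Real.pi * Real.log (max s r)))
      volume s R := by
    refine IntervalIntegrable.congr_ae
      (f := fun r => (2 * Real.pi) * (r * Real.log r))
      ((continuous_const.mul Real.continuous_mul_log).intervalIntegrable _ _) ?_
    rw [Filter.eventuallyEq_iff_exists_mem]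
    refine ⟨Set.uIoc s R, ?_, ?_⟩
    · rw [MeasureTheory.mem_ae_iff]
      simp [MeasureTheory.Measure.restrict_apply (measurableSet_uIoc (a := s) (b := R)).compl]
    · intro r hr
      have : max s r = r := by
        rw [Set.uIoc_of_le hsR.le] at hr
        exact max_eq_right hr.1.le
      simp only [this]; ring
  rw [← intervalIntegral.integral_add_adjacent_intervals hi1 hi2, h1, h2]
  have hslog : s^2 * Real.log s - s^2 * Real.log s = 0 := by ring
  ring

lemma Hne (a : ℂ) {r : ℝ} (hr : 0 < r) (hne : ‖a‖ ≠ r) (θ : ℝ) :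
    ‖a - r * Complex.exp (θ * I)‖ ≠ 0 := by
  intro h
  rw [norm_eq_zero, sub_eq_zero] at h
  apply hne
  rw [h, norm_mul, Complex.norm_of_nonneg hr.le, Complex.norm_exp_ofReal_mul_I, mul_one]

lemma Lsec (a : ℂ) {r : ℝ} (hr : 0 < r) (hne : ‖a‖ ≠ r) :
    Continuous fun θ : ℝ => Real.log (‖a - r * Complex.exp (θ * I)‖) := by
  rw [continuous_iff_continuousAt]
  intro θ
  refine ContinuousAt.log ?_ (Hne a hr hne θ)
  exact (continuous_norm.comp (by fun_prop)).continuousAt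

lemma LintOn (a : ℂ) {r : ℝ} (hr : 0 < r) (hne : ‖a‖ ≠ r) :
    IntegrableOn (fun θ : ℝ => Real.log (‖a - r * Complex.exp (θ * I)‖))
      (Set.Ioo (-Real.pi) Real.pi) := by
  exact (((Lsec a hr hne).continuousOn).integrableOn_compact isCompact_Icc).mono_set
    Set.Ioo_subset_Icc_self

lemma LmaxintOn (a : ℂ) {r : ℝ} (hr : 0 < r) (hne : ‖a‖ ≠ r) :
    IntegrableOn (fun θ : ℝ => max (Real.log (‖a - r * Complex.exp (θ * I)‖)) 0)
      (Set.Ioo (-Real.pi) Real.pi) := by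
  exact ((((Lsec a hr hne).max continuous_const).continuousOn).integrableOn_compact
    isCompact_Icc).mono_set Set.Ioo_subset_Icc_self

lemma vol_Ioo_pi : (volume (Set.Ioo (-Real.pi) Real.pi)).toReal = 2 * Real.pi := by
  rw [Real.volume_Ioo, ENNReal.toReal_ofReal (by linarith [Real.pi_pos])]
  ring

lemma Lnorm (a : ℂ) {R r : ℝ} (hR : ‖a‖ < R) (hrI : r ∈ Set.Ioo (0:ℝ) R)
    (hne : ‖a‖ ≠ r) :
    ∫ θ in Set.Ioo (-Real.pi) Real.pi,
        |Real.log (‖a - r * Complex.exp (θ * I)‖)| ≤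
      2 * Real.pi * (2 * max (Real.log (‖a‖ + R)) 0 - Real.log r) := by
  obtain ⟨hr, hrR⟩ := hrI
  have habs : ∀ θ : ℝ, |Real.log (‖a - r * Complex.exp (θ * I)‖)|
      = 2 * max (Real.log (‖a - r * Complex.exp (θ * I)‖)) 0
        - Real.log (‖a - r * Complex.exp (θ * I)‖) := by
    intro θ
    rcases le_or_gt 0 (Real.log (‖a - r * Complex.exp (θ * I)‖)) with h | h
    · rw [_root_.abs_of_nonneg h, max_eq_left h]; ring
    · rw [_root_.abs_of_neg h, max_eq_right h.le]; ring
  simp only [habs]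
  rw [MeasureTheory.integral_sub ((LmaxintOn a hr hne).const_mul 2) (LintOn a hr hne)]
  rw [L1 a hr hne]
  have h1 : ∫ θ in Set.Ioo (-Real.pi) Real.pi,
      2 * max (Real.log (‖a - r * Complex.exp (θ * I)‖)) 0 ≤
      2 * Real.pi * (2 * max (Real.log (‖a‖ + R)) 0) := by
    have hb : ∀ θ ∈ Set.Ioo (-Real.pi) Real.pi,
        2 * max (Real.log (‖a - r * Complex.exp (θ * I)‖)) 0 ≤
        2 * max (Real.log (‖a‖ + R)) 0 := by
      intro θ _
      have hle : ‖a - r * Complex.exp (θ * I)‖ ≤ ‖a‖ + R := by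
        have htri := norm_sub_le a ((r:ℂ) * Complex.exp (θ * I))
        have habsr : ‖(r:ℂ) * Complex.exp (θ * I)‖ = r := by
          rw [norm_mul, Complex.norm_of_nonneg hr.le, Complex.norm_exp_ofReal_mul_I, mul_one]
        rw [habsr] at htri
        linarith
      have : Real.log (‖a - r * Complex.exp (θ * I)‖)
          ≤ max (Real.log (‖a‖ + R)) 0 := by
        rcases eq_or_lt_of_le (norm_nonneg (a - r * Complex.exp (θ * I))) with h0 | h0
        · rw [← h0, Real.log_zero]; exact le_max_right _ _
        · exact le_max_of_le_left (Real.log_le_log h0 hle)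
      have h0 : (0:ℝ) ≤ max (Real.log (‖a‖ + R)) 0 := le_max_right _ _
      have := max_le this h0
      linarith
    calc ∫ θ in Set.Ioo (-Real.pi) Real.pi,
          2 * max (Real.log (‖a - r * Complex.exp (θ * I)‖)) 0
        ≤ ∫ _θ in Set.Ioo (-Real.pi) Real.pi, 2 * max (Real.log (‖a‖ + R)) 0 := by
          apply MeasureTheory.setIntegral_mono_on ((LmaxintOn a hr hne).const_mul 2)
            (MeasureTheory.integrableOn_const (by
              simp [Real.volume_Ioo])) measurableSet_Ioo hb
      _ = 2 * Real.pi * (2 * max (Real.log (‖a‖ + R)) 0) := by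
          rw [MeasureTheory.setIntegral_const, smul_eq_mul, MeasureTheory.measureReal_def, vol_Ioo_pi]
  have h2 : 2 * Real.pi * Real.log r ≤ 2 * Real.pi * Real.log (max (‖a‖) r) := by
    apply mul_le_mul_of_nonneg_left _ (by positivity)
    exact Real.log_le_log hr (le_max_right _ _)
  linarith

lemma LG_meas (a : ℂ) : Measurable fun q : ℝ × ℝ =>
    q.1 * Real.log (‖a - q.1 * Complex.exp (q.2 * I)‖) := by
  apply measurable_fst.mul
  apply Real.measurable_log.comp
  apply Continuous.measurable
  exact continuous_norm.comp (by fun_prop)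

lemma LInt (a : ℂ) {R : ℝ} (hR : 0 < R) (ha : ‖a‖ < R) :
    Integrable (fun q : ℝ × ℝ => q.1 * Real.log (‖a - q.1 * Complex.exp (q.2 * I)‖))
      ((volume.restrict (Set.Ioo (0:ℝ) R)).prod
        (volume.restrict (Set.Ioo (-Real.pi) Real.pi))) := by
  set s := ‖a‖ with hs
  have hmeas := (LG_meas a).aestronglyMeasurable
    (μ := (volume.restrict (Set.Ioo (0:ℝ) R)).prod (volume.restrict (Set.Ioo (-Real.pi) Real.pi)))
  rw [MeasureTheory.integrable_prod_iff hmeas]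
  have hae : ∀ᵐ r ∂volume.restrict (Set.Ioo (0:ℝ) R), r ∈ Set.Ioo (0:ℝ) R ∧ r ≠ s := by
    apply Filter.Eventually.and
    · exact MeasureTheory.ae_restrict_mem measurableSet_Ioo
    · apply MeasureTheory.ae_restrict_of_ae
      rw [MeasureTheory.ae_iff]
      have : {x : ℝ | ¬ x ≠ s} = {s} := by ext x; simp
      rw [this]
      exact Real.volume_singleton
  constructor
  · filter_upwards [hae] with r hr
    obtain ⟨hrI, hrs⟩ := hr
    exact (LintOn a hrI.1 (Ne.symm hrs)).const_mul r
  · apply MeasureTheory.Integrable.mono'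
      (g := fun r => R * (2 * Real.pi * (2 * max (Real.log (s + R)) 0))
        + 2 * Real.pi * |r * Real.log r|)
    · apply MeasureTheory.Integrable.add
      · exact MeasureTheory.integrableOn_const (by simp [Real.volume_Ioo])
      · apply MeasureTheory.Integrable.const_mul
        exact (((continuous_abs.comp Real.continuous_mul_log).continuousOn.integrableOn_compact
          (isCompact_Icc (a := (0:ℝ)) (b := R))).mono_set Set.Ioo_subset_Icc_self)
    · exact hmeas.norm.integral_prod_right'
    · filter_upwards [hae] with r hr
      obtain ⟨hrI, hrs⟩ := hr
      have hnorm : ∀ θ : ℝ, ‖r * Real.log (‖a - r * Complex.exp (θ * I)‖)‖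
          = r * |Real.log (‖a - r * Complex.exp (θ * I)‖)| := by
        intro θ
        rw [Real.norm_eq_abs, abs_mul, _root_.abs_of_pos hrI.1]
      have h1 : ∫ θ in Set.Ioo (-Real.pi) Real.pi,
          ‖r * Real.log (‖a - r * Complex.exp (θ * I)‖)‖
          = r * ∫ θ in Set.Ioo (-Real.pi) Real.pi,
            |Real.log (‖a - r * Complex.exp (θ * I)‖)| := by
        simp only [hnorm]
        exact MeasureTheory.integral_const_mul r _
      have hb := Lnorm a ha hrI (Ne.symm hrs)
      rw [Real.norm_eq_abs, _root_.abs_of_nonneg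
        (MeasureTheory.integral_nonneg (fun θ => norm_nonneg _)), h1]
      have hmax0 : (0:ℝ) ≤ max (Real.log (s + R)) 0 := le_max_right _ _
      have hr1 : r * ∫ θ in Set.Ioo (-Real.pi) Real.pi,
          |Real.log (‖a - r * Complex.exp (θ * I)‖)|
          ≤ r * (2 * Real.pi * (2 * max (Real.log (s + R)) 0 - Real.log r)) := by
        apply mul_le_mul_of_nonneg_left hb hrI.1.le
      have hr2 : r * (2 * Real.pi * (2 * max (Real.log (s + R)) 0 - Real.log r))
          ≤ R * (2 * Real.pi * (2 * max (Real.log (s + R)) 0)) + 2 * Real.pi * |r * Real.log r| := by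
        have e1 : r * (2 * Real.pi * (2 * max (Real.log (s + R)) 0 - Real.log r))
            = r * (2 * Real.pi * (2 * max (Real.log (s + R)) 0))
              - 2 * Real.pi * (r * Real.log r) := by ring
        rw [e1]
        have e2 : r * (2 * Real.pi * (2 * max (Real.log (s + R)) 0))
            ≤ R * (2 * Real.pi * (2 * max (Real.log (s + R)) 0)) := by
          apply mul_le_mul_of_nonneg_right hrI.2.le (by positivity)
        have e3 : - (2 * Real.pi * (r * Real.log r)) ≤ 2 * Real.pi * |r * Real.log r| := by
          rw [← mul_neg]
          exact mul_le_mul_of_nonneg_left (neg_le_abs _) (by positivity)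
        linarith
      linarith

lemma hsymm_eq (p : ℝ × ℝ) :
    Complex.polarCoord.symm p = (p.1 : ℂ) * Complex.exp (p.2 * I) := by
  rw [Complex.polarCoord_symm_apply, Complex.exp_mul_I, ← Complex.ofReal_cos,
    ← Complex.ofReal_sin]

lemma Lmain (a : ℂ) {R : ℝ} (hR : 0 < R) (ha : ‖a‖ < R) :
    ∫ w in Metric.ball (0:ℂ) R, Real.log (‖a - w‖) =
      Real.pi * (R^2 * Real.log R - R^2/2 + (‖a‖)^2/2) := by
  set s := ‖a‖ with hs
  set G : ℝ × ℝ → ℝ :=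
    fun q => q.1 * Real.log (‖a - q.1 * Complex.exp (q.2 * I)‖) with hG
  set f : ℂ → ℝ :=
    (Metric.ball (0:ℂ) R).indicator (fun w => Real.log (‖a - w‖)) with hf
  have h0 : ∫ w in Metric.ball (0:ℂ) R, Real.log (‖a - w‖) = ∫ w, f w :=
    (MeasureTheory.integral_indicator measurableSet_ball).symm
  have hpolar := Complex.integral_comp_polarCoord_symm f
  rw [h0, ← hpolar]
  have hA : ∀ p ∈ polarCoord.target, p.1 • f (Complex.polarCoord.symm p)
      = (Set.Ioo (0:ℝ) R ×ˢ Set.Ioo (-Real.pi) Real.pi).indicator G p := by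
    rintro ⟨r, θ⟩ hp
    rw [polarCoord_target] at hp
    obtain ⟨hr, hθ⟩ := hp
    simp only [Set.mem_Ioi] at hr
    have hsym := hsymm_eq (r, θ)
    have hmem : Complex.polarCoord.symm (r, θ) ∈ Metric.ball (0:ℂ) R ↔ r < R := by
      rw [Metric.mem_ball, dist_zero_right, hsym, norm_mul,
        Complex.norm_of_nonneg hr.le, Complex.norm_exp_ofReal_mul_I, mul_one]
    by_cases hrR : r < R
    · rw [hf]
      simp only
      rw [Set.indicator_of_mem (hmem.mpr hrR), Set.indicator_of_mem (by
        exact Set.mem_prod.mpr ⟨⟨hr, hrR⟩, hθ⟩), hG]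
      simp only [smul_eq_mul, hsym]
    · rw [hf]
      simp only
      rw [Set.indicator_of_notMem (fun hmm => hrR (hmem.mp hmm)),
        Set.indicator_of_notMem (by
          intro hmm
          exact hrR (Set.mem_prod.mp hmm).1.2), smul_zero]
  rw [MeasureTheory.setIntegral_congr_fun polarCoord.open_target.measurableSet hA,
    MeasureTheory.setIntegral_indicator (measurableSet_Ioo.prod measurableSet_Ioo)]
  have hsub : (Set.Ioo (0:ℝ) R ×ˢ Set.Ioo (-Real.pi) Real.pi) ⊆ polarCoord.target := by
    rw [polarCoord_target]
    exact Set.prod_mono Set.Ioo_subset_Ioi_self subset_rfl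
  rw [Set.inter_eq_self_of_subset_right hsub]
  have hIntOn : IntegrableOn G (Set.Ioo (0:ℝ) R ×ˢ Set.Ioo (-Real.pi) Real.pi)
      (volume.prod volume) := by
    rw [IntegrableOn, ← MeasureTheory.Measure.prod_restrict]
    exact LInt a hR ha
  rw [MeasureTheory.Measure.volume_eq_prod, MeasureTheory.setIntegral_prod G hIntOn]
  have hae : ∀ᵐ r ∂volume.restrict (Set.Ioo (0:ℝ) R), r ∈ Set.Ioo (0:ℝ) R ∧ r ≠ s := by
    apply Filter.Eventually.and
    · exact MeasureTheory.ae_restrict_mem measurableSet_Ioo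
    · apply MeasureTheory.ae_restrict_of_ae
      rw [MeasureTheory.ae_iff]
      have : {x : ℝ | ¬ x ≠ s} = {s} := by ext x; simp
      rw [this]
      exact Real.volume_singleton
  have hC : (fun r => ∫ θ in Set.Ioo (-Real.pi) Real.pi, G (r, θ))
      =ᵐ[volume.restrict (Set.Ioo (0:ℝ) R)]
      fun r => r * (2 * Real.pi * Real.log (max s r)) := by
    filter_upwards [hae] with r hr
    obtain ⟨hrI, hrs⟩ := hr
    rw [hG]
    simp only
    rw [MeasureTheory.integral_const_mul, L1 a hrI.1 (Ne.symm hrs), ← hs]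
  rw [MeasureTheory.integral_congr_ae hC]
  exact Lrad (norm_nonneg a) ha

theorem disc_log_integral_inside (R : ℝ) (hR : 0 < R) (p ζ : ℂ)
    (h : ‖ζ - p‖ < R) :
    (1 / Real.pi) * ∫ z in Metric.ball p R, Real.log ‖ζ - z‖ =
      R ^ 2 * Real.log R - R ^ 2 / 2 + ‖ζ - p‖ ^ 2 / 2 := by
  have ht : ∫ z in Metric.ball p R, Real.log (‖ζ - z‖)
      = ∫ w in Metric.ball (0:ℂ) R, Real.log (‖(ζ - p) - w‖) := by
    rw [← MeasureTheory.integral_indicator measurableSet_ball,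
      ← MeasureTheory.integral_indicator measurableSet_ball]
    rw [← MeasureTheory.integral_add_left_eq_self
      ((Metric.ball p R).indicator fun z => Real.log (‖ζ - z‖)) p]
    congr 1
    funext w
    by_cases hw : w ∈ Metric.ball (0:ℂ) R
    · rw [Set.indicator_of_mem hw, Set.indicator_of_mem (by
        rw [Metric.mem_ball] at hw ⊢
        simpa [Complex.dist_eq] using hw)]
      congr 1
      ring_nf
    · rw [Set.indicator_of_notMem hw, Set.indicator_of_notMem (by
        intro hmm
        apply hw
        rw [Metric.mem_ball] at hmm ⊢
        simpa [Complex.dist_eq] using hmm)]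
  rw [ht, Lmain (ζ - p) hR h]
  have hπ : Real.pi ≠ 0 := Real.pi_ne_zero
  field_simp
end

section
/- For a, b > 0 with a > b, the 2k-th moment of the filled ellipse satisfies (1/(ab)) ∫_K z^{2k} dA(z) = 2 · binom(1/2, k+1) · (b² - a²)^k for every nonnegative integer k, where binom(1/2, k+1) is the generalized binomial coefficient. -/
open MeasureTheory Complex Set intervalIntegral

/-- Generalized binomial coefficient `binom x m = x (x-1) ⋯ (x-m+1) / m!`. -/
noncomputable def genBinom (x : ℝ) (m : ℕ) : ℝ :=
  (∏ i ∈ Finset.range m, (x - i)) / (Nat.factorial m)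

lemma chooseId (k : ℕ) : (k+1)^2 * Nat.choose (2*k+2) (k+1) = (2*k+2)*((2*k+1)* Nat.choose (2*k) k) := by
  have h1 := Nat.add_one_mul_choose_eq (2*k+1) k
  have h2 := Nat.add_one_mul_choose_eq (2*k) k
  have h3 : Nat.choose (2*k+1) (k+1) = Nat.choose (2*k+1) k := by
    rw [← Nat.choose_symm (by omega : k + 1 ≤ 2*k+1)]
    congr 1
    omega
  rw [h3] at h2
  have h1' : (2*k+2) * Nat.choose (2*k+1) k = Nat.choose (2*k+2) (k+1) * (k+1) := by
    simpa using h1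
  calc (k+1)^2 * Nat.choose (2*k+2) (k+1) = (Nat.choose (2*k+2) (k+1) * (k+1)) * (k+1) := by ring
    _ = ((2*k+2) * Nat.choose (2*k+1) k) * (k+1) := by rw [← h1']
    _ = (2*k+2) * (Nat.choose (2*k+1) k * (k+1)) := by ring
    _ = (2*k+2)*((2*k+1)* Nat.choose (2*k) k) := by rw [← h2]

lemma genBinom_half (k : ℕ) :
    genBinom (1/2) (k+1) = (-1)^k * (Nat.choose (2*k) k : ℝ) / (2*(k+1)*4^k) := by
  induction k with
  | zero => simp [genBinom]
  | succ k ih =>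
    have hstep : genBinom (1/2) (k+2) = genBinom (1/2) (k+1) * (1/2 - (k+1)) / (k+2) := by
      rw [genBinom, genBinom, Finset.prod_range_succ, Nat.factorial_succ]
      have hf : ((k+1).factorial : ℝ) ≠ 0 := by positivity
      push_cast
      field_simp
      ring_nf
    have hcast := congrArg (Nat.cast : ℕ → ℝ) (chooseId k)
    push_cast at hcast
    rw [hstep, ih]
    have h4 : (4:ℝ)^k ≠ 0 := by positivity
    have hk1 : ((k:ℝ)+1) ≠ 0 := by positivity
    have hk2 : ((k:ℝ)+2) ≠ 0 := by positivity
    have h2k2 : (2*(k:ℝ)+2) ≠ 0 := by positivity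
    rw [show (2*k+2 : ℕ) = 2*(k+1) from by ring] at hcast
    have hcast2 : ((k:ℝ)+1) * ((2*(k+1)).choose (k+1) : ℝ)
        = 2*(2*(k:ℝ)+1)*((2*k).choose k : ℝ) := by
      apply mul_left_cancel₀ hk1
      linear_combination hcast
    rw [pow_succ, pow_succ]
    push_cast
    field_simp
    linear_combination (2*((k:ℝ)+2)) * hcast2


lemma diskMoment (j m : ℕ) :
    ∫ z in Metric.closedBall (0:ℂ) 1, z ^ j * (starRingEnd ℂ z) ^ m =
      if j = m then (Real.pi : ℂ) / (j + 1) else 0 := by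
  set g : ℂ → ℂ := fun z => z ^ j * (starRingEnd ℂ z) ^ m with hg
  rw [← MeasureTheory.integral_indicator measurableSet_closedBall]
  rw [← Complex.integral_comp_polarCoord_symm (Set.indicator (Metric.closedBall (0:ℂ) 1) g)]
  have h1 : EqOn (fun p : ℝ × ℝ => p.1 • (Set.indicator (Metric.closedBall (0:ℂ) 1) g)
      (Complex.polarCoord.symm p))
      (Set.indicator {q : ℝ × ℝ | q.1 ≤ 1} (fun q => q.1 • g (Complex.polarCoord.symm q)))
      polarCoord.target := by
    intro p hp
    rw [polarCoord_target] at hp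
    have hp1 : 0 < p.1 := hp.1
    have habs : Complex.polarCoord.symm p ∈ Metric.closedBall (0:ℂ) 1 ↔ p.1 ≤ 1 := by
      rw [Metric.mem_closedBall, dist_zero_right,
        Complex.norm_polarCoord_symm, abs_of_pos hp1]
    by_cases h : p.1 ≤ 1
    · simp only [Set.indicator_of_mem (habs.mpr h), Set.indicator_of_mem (show p ∈ {q : ℝ × ℝ | q.1 ≤ 1} from h)]
    · simp only [Set.indicator_of_notMem (fun hc => h (habs.mp hc)),
        Set.indicator_of_notMem (show p ∉ {q : ℝ × ℝ | q.1 ≤ 1} from h), smul_zero]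
  rw [setIntegral_congr_fun polarCoord.open_target.measurableSet h1,
    setIntegral_indicator (measurableSet_le measurable_fst measurable_const)]
  have hset : polarCoord.target ∩ {q : ℝ × ℝ | q.1 ≤ 1}
      = Set.Ioc (0:ℝ) 1 ×ˢ Set.Ioo (-Real.pi) Real.pi := by
    rw [polarCoord_target]
    ext ⟨x, y⟩
    simp only [Set.mem_inter_iff, Set.mem_prod, Set.mem_Ioi, Set.mem_Ioo, Set.mem_setOf_eq,
      Set.mem_Ioc]
    tauto
  rw [hset]
  have hFcont : Continuous (fun q : ℝ × ℝ => q.1 • g (Complex.polarCoord.symm q)) := by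
    simp_rw [hg, Complex.polarCoord_symm_apply, ← Complex.star_def]
    have hb : Continuous fun q : ℝ × ℝ => (q.1 : ℂ) * (Real.cos q.2 + Real.sin q.2 * Complex.I) := by
      fun_prop
    exact continuous_fst.smul ((hb.pow j).mul ((continuous_star.comp hb).pow m))
  have hInt : IntegrableOn (fun q : ℝ × ℝ => q.1 • g (Complex.polarCoord.symm q))
      (Set.Ioc (0:ℝ) 1 ×ˢ Set.Ioo (-Real.pi) Real.pi) := by
    apply (hFcont.continuousOn.integrableOn_compact (isCompact_Icc.prod isCompact_Icc)).mono_set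
    exact Set.prod_mono Set.Ioc_subset_Icc_self Set.Ioo_subset_Icc_self
  rw [Measure.volume_eq_prod, setIntegral_prod _ hInt]
  have hkey : ∀ x : ℝ, ∀ y : ℝ, (x, y).1 • g (Complex.polarCoord.symm (x, y))
      = (x : ℂ) ^ (j + m + 1) * Complex.exp ((((j:ℂ) - m) * Complex.I) * y) := by
    intro x y
    have hsymm : Complex.polarCoord.symm (x, y) = (x : ℂ) * Complex.exp (y * Complex.I) := by
      rw [Complex.polarCoord_symm_apply, Complex.exp_mul_I]
      norm_num
    have hconj : (starRingEnd ℂ) ((x : ℂ) * Complex.exp (y * Complex.I))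
        = (x : ℂ) * Complex.exp (-(y * Complex.I)) := by
      rw [map_mul, Complex.conj_ofReal, ← Complex.exp_conj]
      congr 1
      simp [Complex.ext_iff]
    rw [hg]
    simp only [hsymm, hconj, Complex.real_smul, mul_pow]
    rw [← Complex.exp_nat_mul, ← Complex.exp_nat_mul, mul_mul_mul_comm, ← pow_add,
      ← Complex.exp_add, ← mul_assoc, ← pow_succ']
    congr 1
    ring
  simp_rw [hkey]
  rcases eq_or_ne j m with rfl | hjm
  · simp only [sub_self, zero_mul, Complex.exp_zero, mul_one, if_pos rfl, if_true]
    have inner1 : ∀ x : ℝ, (∫ _ in Ioo (-Real.pi) Real.pi, (x:ℂ)^(j+j+1)) 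
        = ((2*Real.pi : ℝ)) • (x:ℂ)^(j+j+1) := by
      intro x
      rw [setIntegral_const, Real.volume_real_Ioo_of_le (by linarith [Real.pi_pos])]
      congr 1
      ring
    simp_rw [inner1]
    rw [MeasureTheory.integral_smul]
    have hreal : (∫ x in Ioc (0:ℝ) 1, x^(j+j+1)) = 1/(2*(j:ℝ)+2) := by
      rw [← intervalIntegral.integral_of_le zero_le_one, integral_pow, one_pow,
        zero_pow (by omega), sub_zero]
      push_cast
      rw [one_div, one_div]
      congr 1
      ring
    have hint : IntegrableOn (fun x : ℝ => x^(j+j+1)) (Ioc (0:ℝ) 1) :=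
      (continuous_pow _).integrableOn_Ioc
    have houter : (∫ x in Ioc (0:ℝ) 1, (x:ℂ)^(j+j+1)) = ((1/(2*(j:ℝ)+2) : ℝ) : ℂ) := by
      calc (∫ x in Ioc (0:ℝ) 1, (x:ℂ)^(j+j+1))
          = ∫ x in Ioc (0:ℝ) 1, Complex.ofRealCLM (x^(j+j+1)) := by
            simp only [Complex.ofRealCLM_apply, Complex.ofReal_pow]
        _ = Complex.ofRealCLM (∫ x in Ioc (0:ℝ) 1, x^(j+j+1)) :=
            ContinuousLinearMap.integral_comp_comm _ hint
        _ = ((1/(2*(j:ℝ)+2) : ℝ) : ℂ) := by rw [hreal]; simp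
    rw [houter, Complex.real_smul]
    have hj1 : ((j:ℂ) + 1) ≠ 0 := Nat.cast_add_one_ne_zero j
    have h2 : (2*(j:ℂ)+2) ≠ 0 := by
      intro h
      exact hj1 (by linear_combination h/2)
    push_cast
    field_simp
  · rw [if_neg hjm]
    have hc : ((j:ℂ) - m) * Complex.I ≠ 0 := by
      apply mul_ne_zero _ Complex.I_ne_zero
      rw [sub_ne_zero]
      exact_mod_cast fun h => hjm (Nat.cast_injective h)
    have inner0 : ∀ x : ℝ, (∫ y in Ioo (-Real.pi) Real.pi,
        (x:ℂ) ^ (j + m + 1) * Complex.exp ((((j:ℂ) - m) * Complex.I) * y)) = 0 := by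
      intro x
      rw [MeasureTheory.integral_const_mul, ← integral_Ioc_eq_integral_Ioo,
        ← intervalIntegral.integral_of_le (by linarith [Real.pi_pos] : -Real.pi ≤ Real.pi),
        integral_exp_mul_complex hc]
      have hexp : Complex.exp ((((j:ℂ) - m) * Complex.I) * ((Real.pi : ℝ) : ℂ))
          = Complex.exp ((((j:ℂ) - m) * Complex.I) * (((-Real.pi : ℝ)) : ℂ)) := by
        rw [show (((j:ℂ) - m) * Complex.I) * ((Real.pi : ℝ) : ℂ)
            = (((j:ℂ) - m) * Complex.I) * (((-Real.pi : ℝ)) : ℂ)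
              + (((j:ℤ) - m : ℤ) : ℂ) * (2 * Real.pi * Complex.I) by
          push_cast; ring]
        rw [Complex.exp_add, Complex.exp_int_mul_two_pi_mul_I, mul_one]
      rw [hexp, sub_self, zero_div, mul_zero]
    simp_rw [inner0]
    exact integral_zero _ _


noncomputable def eLL (a b : ℝ) : ℂ →L[ℝ] ℂ :=
  a • Complex.reCLM.smulRight 1 + b • Complex.imCLM.smulRight Complex.I

lemma eLL_apply (a b : ℝ) (z : ℂ) :
    eLL a b z = ((a * z.re : ℝ) : ℂ) + ((b * z.im : ℝ) : ℂ) * Complex.I := by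
  simp [eLL, Complex.real_smul]
  ring

lemma eLL_re (a b : ℝ) (z : ℂ) : (eLL a b z).re = a * z.re := by
  simp [eLL_apply]

lemma eLL_im (a b : ℝ) (z : ℂ) : (eLL a b z).im = b * z.im := by
  simp [eLL_apply]

lemma eLL_det (a b : ℝ) : (eLL a b).det = a * b := by
  have hM : LinearMap.toMatrix Complex.basisOneI Complex.basisOneI
      ((eLL a b : ℂ →L[ℝ] ℂ) : ℂ →ₗ[ℝ] ℂ) = !![a, 0; 0, b] := by
    ext i j
    fin_cases i <;> fin_cases j <;>
      simp [LinearMap.toMatrix_apply, Complex.coe_basisOneI_repr, Complex.coe_basisOneI,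
        eLL_re, eLL_im]
  have : (eLL a b).det = LinearMap.det ((eLL a b : ℂ →L[ℝ] ℂ) : ℂ →ₗ[ℝ] ℂ) := rfl
  rw [this, ← LinearMap.det_toMatrix Complex.basisOneI, hM, Matrix.det_fin_two_of]
  ring

lemma eLL_form (a b : ℝ) (w : ℂ) :
    eLL a b w = (((a+b)/2 : ℝ) : ℂ) * w + (((a-b)/2 : ℝ) : ℂ) * (starRingEnd ℂ) w := by
  apply Complex.ext <;>
    simp [eLL_re, eLL_im, Complex.add_re, Complex.add_im, Complex.mul_re, Complex.mul_im] <;>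
    ring

lemma eLL_image (a b : ℝ) (ha : 0 < a) (hb : 0 < b) :
    eLL a b '' Metric.closedBall 0 1 = {z : ℂ | (z.re / a) ^ 2 + (z.im / b) ^ 2 ≤ 1} := by
  ext z
  simp only [Set.mem_image, Set.mem_setOf_eq, Metric.mem_closedBall, dist_zero_right]
  constructor
  · rintro ⟨w, hw, rfl⟩
    rw [eLL_re, eLL_im, mul_div_cancel_left₀ _ ha.ne', mul_div_cancel_left₀ _ hb.ne']
    have : w.re ^ 2 + w.im ^ 2 ≤ 1 := by
      have h1 : ‖w‖ ^ 2 ≤ 1 := by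
        nlinarith [norm_nonneg w]
      rwa [Complex.sq_norm, Complex.normSq_apply, ← pow_two, ← pow_two] at h1
    exact this
  · intro hz
    refine ⟨⟨z.re / a, z.im / b⟩, ?_, ?_⟩
    · rw [show ‖(⟨z.re / a, z.im / b⟩ : ℂ)‖ ≤ 1 ↔
          ‖(⟨z.re / a, z.im / b⟩ : ℂ)‖ ^ 2 ≤ 1 from
        ⟨fun h => by nlinarith [norm_nonneg (⟨z.re / a, z.im / b⟩ : ℂ)],
         fun h => by nlinarith [norm_nonneg (⟨z.re / a, z.im / b⟩ : ℂ)]⟩]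
      rw [Complex.sq_norm, Complex.normSq_apply]
      simpa [pow_two] using hz
    · apply Complex.ext
      · rw [eLL_re]
        exact mul_div_cancel₀ _ ha.ne'
      · rw [eLL_im]
        exact mul_div_cancel₀ _ hb.ne'

lemma eLL_injOn (a b : ℝ) (ha : a ≠ 0) (hb : b ≠ 0) :
    Set.InjOn (eLL a b) (Metric.closedBall 0 1) := by
  intro w _ w' _ h
  apply Complex.ext
  · have := congrArg Complex.re h
    rw [eLL_re, eLL_re] at this
    exact mul_left_cancel₀ ha this
  · have := congrArg Complex.im h
    rw [eLL_im, eLL_im] at this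
    exact mul_left_cancel₀ hb this

theorem ellipse_even_moments (a b : ℝ) (hb : 0 < b) (hab : b < a)
    (K : Set ℂ) (hK : K = {z : ℂ | (z.re / a) ^ 2 + (z.im / b) ^ 2 ≤ 1}) (k : ℕ) :
    (1 / ((a : ℂ) * b)) * ((1 / (Real.pi : ℂ)) * ∫ z in K, z ^ (2 * k)) =
      ((2 * genBinom (1 / 2) (k + 1) * (b ^ 2 - a ^ 2) ^ k : ℝ) : ℂ) := by
  have ha : 0 < a := hb.trans hab
  have h1 : (∫ z in K, z ^ (2*k)) = ∫ w in Metric.closedBall (0:ℂ) 1,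
      |(eLL a b).det| • (eLL a b w) ^ (2*k) := by
    rw [hK, ← eLL_image a b ha hb]
    exact integral_image_eq_integral_abs_det_fderiv_smul volume measurableSet_closedBall
      (fun x _ => ((eLL a b).hasFDerivAt).hasFDerivWithinAt) (eLL_injOn a b ha.ne' hb.ne')
      (fun z => z ^ (2*k))
  rw [h1]
  simp_rw [eLL_det, abs_of_pos (mul_pos ha hb), eLL_form a b, add_pow]
  rw [MeasureTheory.integral_smul]
  have hint : ∀ j ∈ Finset.range (2*k+1), IntegrableOn
      (fun w : ℂ => ((((a+b)/2 : ℝ):ℂ) * w)^j * ((((a-b)/2 : ℝ):ℂ) * (starRingEnd ℂ) w)^(2*k-j)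
        * (((2*k).choose j : ℕ) : ℂ)) (Metric.closedBall (0:ℂ) 1) := by
    intro j _
    apply ContinuousOn.integrableOn_compact (isCompact_closedBall _ _)
    apply Continuous.continuousOn
    exact (((continuous_const.mul continuous_id).pow j).mul
      ((continuous_const.mul Complex.continuous_conj).pow _)).mul continuous_const
  rw [MeasureTheory.integral_finset_sum _ hint]
  have hterm : ∀ j ∈ Finset.range (2*k+1),
      (∫ w in Metric.closedBall (0:ℂ) 1,
        ((((a+b)/2 : ℝ):ℂ) * w)^j * ((((a-b)/2 : ℝ):ℂ) * (starRingEnd ℂ) w)^(2*k-j)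
          * (((2*k).choose j : ℕ) : ℂ))
      = ((((a+b)/2 : ℝ):ℂ)^j * (((a-b)/2 : ℝ):ℂ)^(2*k-j) * (((2*k).choose j : ℕ) : ℂ))
          * (if j = 2*k-j then (Real.pi:ℂ)/(j+1) else 0) := by
    intro j _
    have e1 : (∫ w in Metric.closedBall (0:ℂ) 1,
        ((((a+b)/2 : ℝ):ℂ) * w)^j * ((((a-b)/2 : ℝ):ℂ) * (starRingEnd ℂ) w)^(2*k-j)
          * (((2*k).choose j : ℕ) : ℂ))
        = ∫ w in Metric.closedBall (0:ℂ) 1,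
          ((((a+b)/2 : ℝ):ℂ)^j * (((a-b)/2 : ℝ):ℂ)^(2*k-j) * (((2*k).choose j : ℕ) : ℂ))
            * (w^j * ((starRingEnd ℂ) w)^(2*k-j)) :=
      MeasureTheory.integral_congr_ae (Filter.Eventually.of_forall fun w => by ring)
    rw [e1, MeasureTheory.integral_const_mul, diskMoment]
  rw [Finset.sum_congr rfl hterm]
  rw [Finset.sum_eq_single_of_mem k (by simp [Finset.mem_range]; omega)
    (fun j hj hne => by
      rw [if_neg (fun h => hne (by rw [Finset.mem_range] at hj; omega)), mul_zero])]
  rw [if_pos (by omega : k = 2*k - k)]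
  have hkk : 2*k - k = k := by omega
  rw [hkk]
  have hV : 2 * genBinom (1/2) (k+1) * (b^2-a^2)^k
      = (Nat.choose (2*k) k : ℝ) * (((a^2-b^2)/4)^k) / (k+1) := by
    rw [genBinom_half, show (b^2-a^2 : ℝ) = (-1)*(a^2-b^2) by ring, mul_pow, div_pow]
    have h11 : ((-1:ℝ))^(k*2) = 1 := by
      rw [mul_comm k 2, pow_mul]
      norm_num
    have hk1 : ((k:ℝ)+1) ≠ 0 := by positivity
    have h4 : ((4:ℝ))^k ≠ 0 := by positivity
    field_simp
    linear_combination ((Nat.choose (2*k) k : ℝ)*(a^2-b^2)^k) * h11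
  have hαβ : ((((a+b)/2 : ℝ):ℂ))^k * ((((a-b)/2 : ℝ):ℂ))^k = (((a:ℂ)^2 - b^2)/4)^k := by
    rw [← mul_pow]
    congr 1
    push_cast
    ring
  have hπ : (Real.pi : ℂ) ≠ 0 := Complex.ofReal_ne_zero.mpr Real.pi_ne_zero
  have hk1 : ((k:ℂ)+1) ≠ 0 := Nat.cast_add_one_ne_zero k
  have haC : (a:ℂ) ≠ 0 := Complex.ofReal_ne_zero.mpr ha.ne'
  have hbC : (b:ℂ) ≠ 0 := Complex.ofReal_ne_zero.mpr hb.ne'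
  have h4C : ((4:ℂ))^k ≠ 0 := pow_ne_zero _ (by norm_num)
  rw [hV, hαβ, Complex.real_smul]
  push_cast
  field_simp
end

section
/- The measure dμ(x) = (1/(2π|x|))√((λ₊² - x²)(x² - λ₋²)) 𝟙_{[-λ₊,-λ₋]∪[λ₋,λ₊]}(x) dx with λ± = √(2c+1) ± 1, c > 0, is a probability measure on ℝ. -/
open MeasureTheory Real

noncomputable def MPF (a b x : ℝ) : ℝ :=
  Real.sqrt ((b^2 - x^2)*(x^2 - a^2)) / 2
  + (a^2+b^2)/4 * Real.arcsin ((2*x^2 - a^2 - b^2)/(b^2 - a^2))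
  - a*b/2 * Real.arcsin (((a^2+b^2)*x^2 - 2*a^2*b^2)/((b^2-a^2)*x^2))

set_option maxHeartbeats 2000000 in
lemma MPF_deriv (a b : ℝ) (ha : 0 < a) (hab : a < b) {x : ℝ} (hx : x ∈ Set.Ioo a b) :
    HasDerivAt (MPF a b) (Real.sqrt ((b^2 - x^2)*(x^2 - a^2)) / x) x := by
  obtain ⟨hax, hxb⟩ := hx
  have hx0 : 0 < x := ha.trans hax
  have hb0 : 0 < b := hx0.trans hxb
  have hBA : (0:ℝ) < b^2 - a^2 := by nlinarith
  have hP : (0:ℝ) < (b^2 - x^2)*(x^2 - a^2) := mul_pos (by nlinarith) (by nlinarith)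
  set R := Real.sqrt ((b^2 - x^2)*(x^2 - a^2)) with hRdef
  have hR : 0 < R := Real.sqrt_pos.mpr hP
  have hR2 : R^2 = (b^2 - x^2)*(x^2 - a^2) := Real.sq_sqrt hP.le
  -- derivative of the inner polynomial
  have hPd : HasDerivAt (fun x : ℝ => (b^2 - x^2)*(x^2 - a^2))
      (-4*x^3 + 2*(a^2+b^2)*x) x := by
    have h := (((hasDerivAt_pow 2 x).const_sub (b^2)).mul ((hasDerivAt_pow 2 x).sub_const (a^2)))
    exact h.congr_deriv (by ring)
  have h1 : HasDerivAt (fun x : ℝ => Real.sqrt ((b^2 - x^2)*(x^2 - a^2)) / 2)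
      ((1 / (2 * R) * (-4*x^3 + 2*(a^2+b^2)*x)) / 2) x := by
    exact ((Real.hasDerivAt_sqrt hP.ne').comp x hPd).div_const 2
  -- first arcsin term
  have hg : HasDerivAt (fun x : ℝ => (2*x^2 - a^2 - b^2)/(b^2 - a^2)) (4*x/(b^2-a^2)) x := by
    have h : HasDerivAt (fun x : ℝ => 2*x^2 - a^2 - b^2) (4*x) x := by
      have := (((hasDerivAt_pow 2 x).const_mul 2).sub_const (a^2)).sub_const (b^2)
      exact this.congr_deriv (by ring)
    convert h.div_const (b^2-a^2) using 1
  have hglt : (2*x^2 - a^2 - b^2)/(b^2 - a^2) < 1 := (div_lt_one hBA).mpr (by nlinarith)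
  have hggt : -1 < (2*x^2 - a^2 - b^2)/(b^2 - a^2) := (lt_div_iff₀ hBA).mpr (by nlinarith)
  have h2 : HasDerivAt (fun x : ℝ => (a^2+b^2)/4 * Real.arcsin ((2*x^2 - a^2 - b^2)/(b^2 - a^2)))
      ((a^2+b^2)/4 * (1 / Real.sqrt (1 - ((2*x^2 - a^2 - b^2)/(b^2 - a^2))^2) * (4*x/(b^2-a^2)))) x :=
    ((Real.hasDerivAt_arcsin hggt.ne' hglt.ne).comp x hg).const_mul _
  -- second arcsin term
  have hden_pos : (0:ℝ) < (b^2-a^2)*x^2 := mul_pos hBA (by positivity)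
  have hnum : HasDerivAt (fun x : ℝ => (a^2+b^2)*x^2 - 2*a^2*b^2) (2*(a^2+b^2)*x) x := by
    have := ((hasDerivAt_pow 2 x).const_mul (a^2+b^2)).sub_const (2*a^2*b^2)
    exact this.congr_deriv (by ring)
  have hden : HasDerivAt (fun x : ℝ => (b^2-a^2)*x^2) (2*(b^2-a^2)*x) x := by
    have := (hasDerivAt_pow 2 x).const_mul (b^2-a^2)
    exact this.congr_deriv (by ring)
  have hψd : HasDerivAt (fun x : ℝ => ((a^2+b^2)*x^2 - 2*a^2*b^2)/((b^2-a^2)*x^2))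
      ((2*(a^2+b^2)*x * ((b^2-a^2)*x^2) - ((a^2+b^2)*x^2 - 2*a^2*b^2) * (2*(b^2-a^2)*x))
        / ((b^2-a^2)*x^2)^2) x := hnum.div hden hden_pos.ne'
  have hψlt : ((a^2+b^2)*x^2 - 2*a^2*b^2)/((b^2-a^2)*x^2) < 1 :=
    (div_lt_one hden_pos).mpr (by nlinarith [mul_pos (mul_pos ha ha) (show (0:ℝ) < b^2 - x^2 by nlinarith)])
  have hψgt : -1 < ((a^2+b^2)*x^2 - 2*a^2*b^2)/((b^2-a^2)*x^2) :=
    (lt_div_iff₀ hden_pos).mpr (by nlinarith [mul_pos (mul_pos hb0 hb0) (show (0:ℝ) < x^2 - a^2 by nlinarith)])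
  have h3 : HasDerivAt (fun x : ℝ => a*b/2 * Real.arcsin (((a^2+b^2)*x^2 - 2*a^2*b^2)/((b^2-a^2)*x^2)))
      (a*b/2 * (1 / Real.sqrt (1 - (((a^2+b^2)*x^2 - 2*a^2*b^2)/((b^2-a^2)*x^2))^2)
        * ((2*(a^2+b^2)*x * ((b^2-a^2)*x^2) - ((a^2+b^2)*x^2 - 2*a^2*b^2) * (2*(b^2-a^2)*x))
          / ((b^2-a^2)*x^2)^2))) x :=
    ((Real.hasDerivAt_arcsin hψgt.ne' hψlt.ne).comp x hψd).const_mul _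
  have hF := (h1.add h2).sub h3
  -- rewrite the two square roots
  have hsg : Real.sqrt (1 - ((2*x^2 - a^2 - b^2)/(b^2 - a^2))^2) = 2*R/(b^2-a^2) := by
    have he : 1 - ((2*x^2 - a^2 - b^2)/(b^2 - a^2))^2 = (2*R/(b^2-a^2))^2 := by
      rw [div_pow, div_pow, mul_pow, hR2]
      field_simp
      ring
    rw [he, Real.sqrt_sq (by positivity)]
  have hsψ : Real.sqrt (1 - (((a^2+b^2)*x^2 - 2*a^2*b^2)/((b^2-a^2)*x^2))^2)
      = 2*a*b*R/((b^2-a^2)*x^2) := by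
    have he : 1 - (((a^2+b^2)*x^2 - 2*a^2*b^2)/((b^2-a^2)*x^2))^2
        = (2*a*b*R/((b^2-a^2)*x^2))^2 := by
      rw [div_pow, div_pow, mul_pow, mul_pow, mul_pow, hR2]
      field_simp
      ring
    rw [he, Real.sqrt_sq (by positivity)]
  rw [hsg, hsψ] at hF
  refine hF.congr_deriv ?_
  have h1' : R ≠ 0 := hR.ne'
  have h2' : x ≠ 0 := hx0.ne'
  have h3' : (b^2 - a^2) ≠ 0 := hBA.ne'
  have h4' : a ≠ 0 := ha.ne'
  have h5' : b ≠ 0 := hb0.ne'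
  have hE : 1 / (2 * R) * (-4 * x ^ 3 + 2 * (a ^ 2 + b ^ 2) * x) / 2 +
        (a ^ 2 + b ^ 2) / 4 * (1 / (2 * R / (b ^ 2 - a ^ 2)) * (4 * x / (b ^ 2 - a ^ 2))) -
      a * b / 2 *
        (1 / (2 * a * b * R / ((b ^ 2 - a ^ 2) * x ^ 2)) *
          ((2 * (a ^ 2 + b ^ 2) * x * ((b ^ 2 - a ^ 2) * x ^ 2) -
              ((a ^ 2 + b ^ 2) * x ^ 2 - 2 * a ^ 2 * b ^ 2) * (2 * (b ^ 2 - a ^ 2) * x)) /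
            ((b ^ 2 - a ^ 2) * x ^ 2) ^ 2))
      = ((b^2 - x^2)*(x^2 - a^2))/(x*R) := by
    field_simp
    ring
  rw [hE, ← hR2, pow_two]
  field_simp

lemma MPF_cont (a b : ℝ) (ha : 0 < a) (hab : a < b) :
    ContinuousOn (MPF a b) (Set.Icc a b) := by
  unfold MPF
  apply ContinuousOn.sub
  · apply ContinuousOn.add
    · exact ((Real.continuous_sqrt.comp (by continuity)).div_const 2).continuousOn
    · exact (continuous_const.mul (Real.continuous_arcsin.comp
        ((by continuity : Continuous fun x : ℝ => 2*x^2 - a^2 - b^2).div_const _))).continuousOn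
  · apply ContinuousOn.mul continuousOn_const
    apply Real.continuous_arcsin.comp_continuousOn
    apply ContinuousOn.div (by fun_prop) (by fun_prop)
    intro x hx
    have hx0 : 0 < x := ha.trans_le hx.1
    have : (0:ℝ) < b^2 - a^2 := by nlinarith
    positivity

lemma MP_integral (a b : ℝ) (ha : 0 < a) (hab : a < b) :
    ∫ x in a..b, Real.sqrt ((b^2 - x^2)*(x^2 - a^2)) / x = Real.pi/4 * (b-a)^2 := by
  have hBA : (0:ℝ) < b^2 - a^2 := by nlinarith
  have hb0 : 0 < b := ha.trans hab
  have hint : IntervalIntegrable (fun x => Real.sqrt ((b^2 - x^2)*(x^2 - a^2)) / x)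
      volume a b := by
    apply ContinuousOn.intervalIntegrable
    apply ContinuousOn.div (by fun_prop) (by fun_prop)
    intro x hx
    rw [Set.uIcc_of_le hab.le] at hx
    exact (ha.trans_le hx.1).ne'
  rw [intervalIntegral.integral_eq_sub_of_hasDeriv_right_of_le hab.le (MPF_cont a b ha hab)
    (fun x hx => (MPF_deriv a b ha hab hx).hasDerivWithinAt) hint]
  unfold MPF
  have e1 : (2*b^2 - a^2 - b^2)/(b^2 - a^2) = 1 := by
    rw [div_eq_one_iff_eq hBA.ne']; ring
  have e2 : ((a^2+b^2)*b^2 - 2*a^2*b^2)/((b^2-a^2)*b^2) = 1 := by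
    rw [div_eq_one_iff_eq (by positivity)]; ring
  have e3 : (2*a^2 - a^2 - b^2)/(b^2 - a^2) = -1 := by
    rw [div_eq_iff hBA.ne']; ring
  have e4 : ((a^2+b^2)*a^2 - 2*a^2*b^2)/((b^2-a^2)*a^2) = -1 := by
    rw [div_eq_iff (by positivity : ((b^2-a^2)*a^2 : ℝ) ≠ 0)]; ring
  rw [e1, e2, e3, e4, Real.arcsin_one, Real.arcsin_neg_one]
  have z1 : (b^2 - b^2)*(b^2 - a^2) = 0 := by ring
  have z2 : (b^2 - a^2)*(a^2 - a^2) = 0 := by ring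
  rw [z1, z2, Real.sqrt_zero]
  ring

theorem symmetric_MP_total_mass (c : ℝ) (hc : 0 < c)
    (lm lp : ℝ) (hlm : lm = Real.sqrt (2 * c + 1) - 1) (hlp : lp = Real.sqrt (2 * c + 1) + 1) :
    ∫ x : ℝ,
      Set.indicator (Set.Icc (-lp) (-lm) ∪ Set.Icc lm lp)
        (fun x => Real.sqrt ((lp ^ 2 - x ^ 2) * (x ^ 2 - lm ^ 2)) / (2 * Real.pi * |x|)) x
      = 1 := by
  have hs : 1 < Real.sqrt (2*c+1) := by
    nlinarith [Real.sq_sqrt (show (0:ℝ) ≤ 2*c+1 by linarith), Real.sqrt_nonneg (2*c+1)]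
  have hlm0 : 0 < lm := by rw [hlm]; linarith
  have hlmlp : lm < lp := by rw [hlm, hlp]; linarith
  have hgap : lp - lm = 2 := by rw [hlm, hlp]; ring
  set f := fun x : ℝ => Real.sqrt ((lp ^ 2 - x ^ 2) * (x ^ 2 - lm ^ 2)) / (2 * Real.pi * |x|)
    with hf
  have hmeas : MeasurableSet (Set.Icc (-lp) (-lm) ∪ Set.Icc lm lp) :=
    measurableSet_Icc.union measurableSet_Icc
  rw [MeasureTheory.integral_indicator hmeas]
  have hcontpos : ContinuousOn f (Set.Icc lm lp) := by
    apply ContinuousOn.div (by fun_prop) (by fun_prop)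
    intro x hx
    have : 0 < x := hlm0.trans_le hx.1
    have : |x| = x := abs_of_pos this
    positivity
  have hcontneg : ContinuousOn f (Set.Icc (-lp) (-lm)) := by
    apply ContinuousOn.div (by fun_prop) (by fun_prop)
    intro x hx
    have hx0 : x < 0 := lt_of_le_of_lt hx.2 (by linarith)
    have : 0 < |x| := abs_pos.mpr hx0.ne
    positivity
  have hdisj : Disjoint (Set.Icc (-lp) (-lm)) (Set.Icc lm lp) := by
    apply Set.disjoint_left.mpr
    rintro x ⟨_, h2⟩ ⟨h3, _⟩
    linarith
  rw [MeasureTheory.setIntegral_union hdisj measurableSet_Icc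
    (hcontneg.integrableOn_Icc) (hcontpos.integrableOn_Icc)]
  have hIccInt : ∀ u v : ℝ, u ≤ v → ∫ x in Set.Icc u v, f x = ∫ x in u..v, f x := by
    intro u v huv
    rw [intervalIntegral.integral_of_le huv, MeasureTheory.integral_Icc_eq_integral_Ioc]
  have hpos : ∫ x in lm..lp, f x = 1/2 := by
    have : ∫ x in lm..lp, f x = ∫ x in lm..lp,
        (1/(2*Real.pi)) * (Real.sqrt ((lp ^ 2 - x ^ 2) * (x ^ 2 - lm ^ 2)) / x) := by
      apply intervalIntegral.integral_congr
      intro x hx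
      rw [Set.uIcc_of_le hlmlp.le] at hx
      have hx0 : 0 < x := hlm0.trans_le hx.1
      rw [hf]
      simp only
      rw [abs_of_pos hx0]
      ring
    rw [this, intervalIntegral.integral_const_mul, MP_integral lm lp hlm0 hlmlp, hgap]
    have hπ : Real.pi ≠ 0 := Real.pi_ne_zero
    field_simp
    ring
  have hneg : ∫ x in Set.Icc (-lp) (-lm), f x = ∫ x in lm..lp, f x := by
    rw [hIccInt _ _ (by linarith)]
    rw [← intervalIntegral.integral_comp_neg f]
    apply intervalIntegral.integral_congr
    intro x hx
    rw [hf]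
    simp [neg_sq, abs_neg]
  rw [hneg, hIccInt lm lp hlmlp.le, hpos]
  norm_num
end
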